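/- A finite connected simple graph G is a median graph if and only if G can be obtained from the one-vertex graph K_1 by a finite sequence of peripheral convex expansions. -/

import Mathlib

open SimpleGraph Polynomial

/-- A median graph: a connected graph in which, for every triple of vertices
`u`, `v`, `w`, there is a unique vertex `m` lying simultaneously on a shortest
`u,v`-path, a shortest `u,w`-path and a shortest `v,w`-path. -/
def IsMedianGraph {V : Type*} (G : SimpleGraph V) : Prop :=
  G.Connected ∧ ∀ u v w : V, ∃! m : V,
    G.dist u m + G.dist m v = G.dist u v ∧
    G.dist u m + G.dist m w = G.dist u w ∧
    G.dist v m + G.dist m w = G.dist v w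

universe u

/-- `S` is (the vertex set of) a convex subgraph of `G`: every shortest path of
`G` between two vertices of `S` lies entirely in `S`.  (The subgraph itself is
the induced subgraph `G.induce S`.) -/
def IsConvexSet {V : Type u} (G : SimpleGraph V) (S : Set V) : Prop :=
  ∀ u ∈ S, ∀ v ∈ S, ∀ p : G.Walk u v, p.IsPath → p.length = G.dist u v →
    ∀ x ∈ p.support, x ∈ S

/-- The peripheral convex expansion of `G` with respect to (the vertex set `S`
of) a convex subgraph: `G` together with a disjoint copy of `G.induce S` and an
edge joining each vertex of `S` to its copy. -/
def pceGraph {V : Type u} (G : SimpleGraph V) (S : Set V) : SimpleGraph (V ⊕ ↥S) where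
  Adj x y :=
    match x, y with
    | Sum.inl u, Sum.inl v => G.Adj u v
    | Sum.inr u, Sum.inr v => G.Adj u v
    | Sum.inl u, Sum.inr v => u = (v : V)
    | Sum.inr u, Sum.inl v => (u : V) = v
  symm := by
    constructor
    rintro (u | u) (v | v) h
    · exact G.adj_symm h
    · exact h.symm
    · exact h.symm
    · exact G.adj_symm h
  loopless := by
    constructor
    rintro (u | u) h
    · exact G.irrefl h
    · exact G.irrefl h

/-- Membership in the smallest class of graphs (up to isomorphism) containing
the one-vertex graph and closed under peripheral convex expansions with respect
to nonempty convex subgraphs. -/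
inductive ObtainedByPCE : ∀ V : Type u, SimpleGraph V → Prop
  | base : ObtainedByPCE PUnit ⊥
  | expand {V : Type u} (G : SimpleGraph V) (S : Set V) (hS : S.Nonempty)
      (hconv : IsConvexSet G S) (hG : ObtainedByPCE V G) :
      ObtainedByPCE (V ⊕ ↥S) (pceGraph G S)
  | iso {V W : Type u} (G : SimpleGraph V) (G' : SimpleGraph W)
      (hG : ObtainedByPCE V G) (e : Nonempty (G ≃g G')) : ObtainedByPCE W G'

/-!
Median graphs are peripheral expansions: choose an edge `ab` for which the halfspace `W_ba` is
smallest. In a median graph halfspaces are convex, a vertex of `W_ba` has at most one neighbour in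
`W_ab`, and such matching edges are parallel (their ends are at equal distances); minimality of
`W_ba` forces every vertex of `W_ba` to have that neighbour. So `G` is the peripheral expansion of
the median graph `G[W_ab]` along the convex set of vertices of `W_ab` with a neighbour in `W_ba`,
and induction on the number of vertices applies.

Conversely, in the expansion of `G` along a convex set, distances are distances in `G` between the
projections plus the difference of levels, so the median of three vertices is the median of their
projections, placed on the level shared by at least two of them.
-/

namespace SimpleGraph

variable {V : Type u} {V' : Type*} {G : SimpleGraph V} {G' : SimpleGraph V'} {S : Set V}
  {a b v x y z : V}

def Between (G : SimpleGraph V) (x z y : V) : Prop :=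
  G.dist x z + G.dist z y = G.dist x y

theorem Between.symm (h : G.Between x z y) : G.Between y z x := by
  unfold Between at *
  rw [dist_comm (u := y) (v := z), dist_comm (u := z) (v := x), dist_comm (u := y) (v := x)]
  omega

theorem Walk.between_of_mem_support {p : G.Walk x y} (hp : p.length = G.dist x y)
    (hz : z ∈ p.support) : G.Between x z y := by
  classical
  have hlen := congrArg Walk.length (p.take_spec hz)
  rw [Walk.length_append] at hlen
  have := dist_le (p.takeUntil z hz)
  have := dist_le (p.dropUntil z hz)
  have := (p.takeUntil z hz).reachable.dist_triangle_left y
  unfold Between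
  omega

theorem Between.exists_walk (h : G.Between x z y) (hxz : G.Reachable x z)
    (hzy : G.Reachable z y) : ∃ p : G.Walk x y, p.length = G.dist x y ∧ z ∈ p.support := by
  obtain ⟨p, hp⟩ := hxz.exists_walk_length_eq_dist
  obtain ⟨q, hq⟩ := hzy.exists_walk_length_eq_dist
  refine ⟨p.append q, by rw [Walk.length_append, hp, hq, h], ?_⟩
  exact Walk.mem_support_append_iff _ _ |>.mpr (.inl p.end_mem_support)

def IsIntervalConvex (G : SimpleGraph V) (S : Set V) : Prop :=
  ∀ ⦃x⦄, x ∈ S → ∀ ⦃y⦄, y ∈ S → ∀ ⦃z⦄, G.Between x z y → z ∈ S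

theorem isConvexSet_iff_isIntervalConvex (hc : G.Connected) :
    IsConvexSet G S ↔ G.IsIntervalConvex S := by
  refine ⟨fun hS x hx y hy z h => ?_, fun hS x hx y hy p _ hp z hz => ?_⟩
  · obtain ⟨p, hp, hz⟩ := h.exists_walk (hc x z) (hc z y)
    exact hS x hx y hy p (p.isPath_of_length_eq_dist hp) hp z hz
  · exact hS hx hy (p.between_of_mem_support hp hz)

theorem exists_adj_dist_eq_of_dist_eq_add_one {n : ℕ} (h : G.dist x y = n + 1) :
    ∃ z, G.Adj x z ∧ G.dist z y = n := by
  obtain ⟨p, hp⟩ :=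
    (Reachable.of_dist_ne_zero (by omega : G.dist x y ≠ 0)).exists_walk_length_eq_dist
  have hnil : ¬ p.Nil := fun hn => by
    rw [Walk.length_eq_zero_iff.mpr hn] at hp
    omega
  have hsnd := p.adj_snd hnil
  refine ⟨p.snd, hsnd, le_antisymm ?_ ?_⟩
  · have := dist_le p.tail
    rw [p.length_tail] at this
    omega
  · have := hsnd.reachable.dist_triangle_left y
    rw [dist_eq_one_iff_adj.mpr hsnd] at this
    omega

theorem Walk.le_add_length {f : V → ℕ} (hf : ∀ ⦃u v⦄, G.Adj u v → f u ≤ f v + 1) :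
    ∀ {x y : V} (p : G.Walk x y), f x ≤ f y + p.length
  | _, _, .nil => by simp
  | _, _, .cons h p => by
    have := hf h
    have := p.le_add_length hf
    rw [Walk.length_cons]
    omega

theorem Reachable.le_add_dist {f : V → ℕ} (hf : ∀ ⦃u v⦄, G.Adj u v → f u ≤ f v + 1)
    (h : G.Reachable x y) : f x ≤ f y + G.dist x y := by
  obtain ⟨p, hp⟩ := h.exists_walk_length_eq_dist
  exact hp ▸ p.le_add_length hf

theorem Hom.dist_le (f : G →g G') (h : G.Reachable x y) : G'.dist (f x) (f y) ≤ G.dist x y := by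
  obtain ⟨p, hp⟩ := h.exists_walk_length_eq_dist
  calc G'.dist (f x) (f y) ≤ (p.map f).length := SimpleGraph.dist_le _
    _ = G.dist x y := by rw [Walk.length_map, hp]

theorem Iso.dist_eq (e : G ≃g G') (x y : V) : G'.dist (e x) (e y) = G.dist x y := by
  by_cases h : G.Reachable x y
  · refine le_antisymm (Hom.dist_le e.toHom h) ?_
    simpa using Hom.dist_le e.symm.toHom (e.reachable_iff.mpr h)
  · rw [dist_eq_zero_of_not_reachable h, dist_eq_zero_of_not_reachable (mt e.reachable_iff.mp h)]

namespace IsIntervalConvex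

variable (hS : G.IsIntervalConvex S) (hc : G.Connected)
include hS hc

theorem exists_induce_walk (x y : S) :
    ∃ p : (G.induce S).Walk x y, p.length = G.dist x y := by
  obtain ⟨q, hq⟩ := hc.exists_walk_length_eq_dist x y
  have hq' : ∀ z ∈ q.support, z ∈ S := fun z hz => hS x.2 y.2 (q.between_of_mem_support hq hz)
  refine ⟨q.induce S hq', ?_⟩
  have := congrArg Walk.length (q.map_induce hq')
  rw [Walk.length_map] at this
  exact this.trans hq

theorem dist_induce (x y : S) : (G.induce S).dist x y = G.dist x y := by
  obtain ⟨p, hp⟩ := hS.exists_induce_walk hc x y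
  exact le_antisymm (hp ▸ dist_le p) (Hom.dist_le (Embedding.induce S).toHom p.reachable)

theorem induce_connected (hne : S.Nonempty) : (G.induce S).Connected := by
  have := hne.to_subtype
  exact .mk fun x y => (hS.exists_induce_walk hc x y).elim fun p _ => p.reachable

end IsIntervalConvex

/-- The halfspace `W_ab`; in a bipartite graph, such as a median graph, it is the usual
`{v | d(v, a) < d(v, b)}`. -/
def halfspace (G : SimpleGraph V) (a b : V) : Set V :=
  {v | G.dist v a + 1 = G.dist v b}

/-- The set `U_ab` of vertices of `W_ab` with a neighbour in `W_ba`. -/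
def halfspaceBoundary (G : SimpleGraph V) (a b : V) : Set V :=
  {u ∈ G.halfspace a b | ∃ v ∈ G.halfspace b a, G.Adj u v}

theorem mem_halfspace : v ∈ G.halfspace a b ↔ G.dist v a + 1 = G.dist v b := Iff.rfl

theorem mem_halfspace_self (hab : G.Adj a b) : a ∈ G.halfspace a b := by
  rw [mem_halfspace, dist_self, dist_eq_one_iff_adj.mpr hab]

theorem mem_halfspaceBoundary_self (hab : G.Adj a b) : a ∈ G.halfspaceBoundary a b :=
  ⟨mem_halfspace_self hab, b, mem_halfspace_self hab.symm, hab⟩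

theorem ne_of_mem_halfspace (hx : x ∈ G.halfspace a b) (hy : y ∈ G.halfspace b a) :
    x ≠ y := by
  rintro rfl
  rw [mem_halfspace] at hx hy
  omega

theorem Connected.mem_halfspace_of_between (hc : G.Connected) (hab : G.Adj a b)
    (hx : x ∈ G.halfspace a b) (h : G.Between x z a) : z ∈ G.halfspace a b := by
  have := hc.dist_triangle (u := z) (v := a) (w := b)
  have := hc.dist_triangle (u := x) (v := z) (w := b)
  rw [dist_eq_one_iff_adj.mpr hab] at *
  rw [mem_halfspace] at *
  unfold Between at h
  omega

theorem Connected.dist_eq_add_one_of_adj_of_mem_halfspace (hc : G.Connected) (hxy : G.Adj x y)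
    (hx : x ∈ G.halfspace a b) (hy : y ∈ G.halfspace b a) : G.dist y a = G.dist x a + 1 := by
  have := hc.dist_triangle (u := y) (v := x) (w := a)
  have := hc.dist_triangle (u := x) (v := y) (w := b)
  rw [dist_eq_one_iff_adj.mpr hxy, dist_eq_one_iff_adj.mpr hxy.symm] at *
  rw [mem_halfspace] at hx hy
  omega

end SimpleGraph

namespace IsMedianGraph

variable {V : Type u} {G : SimpleGraph V} {a b c d e u u' v v' w w' x y z : V}

theorem mem_halfspace_or (hm : IsMedianGraph G) (hab : G.Adj a b) (v : V) :
    v ∈ G.halfspace a b ∨ v ∈ G.halfspace b a := by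
  obtain ⟨m, ⟨hva, hvb, hamb⟩, -⟩ := hm.2 v a b
  have := dist_eq_one_iff_adj.mpr hab
  have := dist_eq_one_iff_adj.mpr hab.symm
  rw [mem_halfspace, mem_halfspace]
  rcases (by omega : G.dist a m = 0 ∨ G.dist m b = 0) with h | h
  · obtain rfl := hm.1.dist_eq_zero_iff.mp h
    omega
  · obtain rfl := hm.1.dist_eq_zero_iff.mp h
    omega

theorem dist_eq_two (hm : IsMedianGraph G) (hxy : G.Adj x y) (hyz : G.Adj y z) (hxz : x ≠ z) :
    G.dist x z = 2 := by
  have := hm.1.dist_triangle (u := x) (v := y) (w := z)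
  have := hm.1.pos_dist_of_ne hxz
  have hxz1 : G.dist x z ≠ 1 := fun h => by
    have := hm.mem_halfspace_or (dist_eq_one_iff_adj.mp h) y
    rw [mem_halfspace, mem_halfspace, dist_eq_one_iff_adj.mpr hxy.symm,
      dist_eq_one_iff_adj.mpr hyz] at this
    omega
  rw [dist_eq_one_iff_adj.mpr hxy, dist_eq_one_iff_adj.mpr hyz] at *
  omega

/-- Median graphs contain no `K_{2,3}`. -/
theorem eq_of_adj_of_adj_of_adj (hm : IsMedianGraph G) (hxy : x ≠ y) (hxz : x ≠ z)
    (hyz : y ≠ z) {m m' : V} (hmx : G.Adj x m) (hmy : G.Adj y m) (hmz : G.Adj z m)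
    (hm'x : G.Adj x m') (hm'y : G.Adj y m') (hm'z : G.Adj z m') : m = m' := by
  have isMedian : ∀ c, G.Adj x c → G.Adj y c → G.Adj z c →
      G.Between x c y ∧ G.Between x c z ∧ G.Between y c z := by
    intro c hx hy hz
    simp only [Between, hm.dist_eq_two hx hy.symm hxy, hm.dist_eq_two hx hz.symm hxz,
      hm.dist_eq_two hy hz.symm hyz, dist_eq_one_iff_adj.mpr hx, dist_eq_one_iff_adj.mpr hy.symm,
      dist_eq_one_iff_adj.mpr hy, dist_eq_one_iff_adj.mpr hz.symm]
    trivial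
  exact (hm.2 x y z).unique (isMedian m hmx hmy hmz) (isMedian m' hm'x hm'y hm'z)

theorem exists_adj_adj_of_dist_eq_two (hm : IsMedianGraph G) (hw : G.dist w w' = 2)
    (hu : G.dist u w = G.dist u w') :
    ∃ x, G.Adj w x ∧ G.Adj w' x ∧ G.dist u x + 1 = G.dist u w := by
  obtain ⟨x, ⟨h₁, h₂, h₃⟩, -⟩ := hm.2 u w w'
  rw [hw, dist_comm (u := w)] at h₃
  have hwx : G.dist x w = 1 := by omega
  have hw'x : G.dist x w' = 1 := by omega
  rw [dist_comm] at hwx hw'x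
  exact ⟨x, dist_eq_one_iff_adj.mp hwx, dist_eq_one_iff_adj.mp hw'x, by omega⟩

theorem eq_of_adj_of_mem_halfspace (hm : IsMedianGraph G) (hab : G.Adj a b)
    (hv : v ∈ G.halfspace b a) (hw : w ∈ G.halfspace a b) (hw' : w' ∈ G.halfspace a b)
    (hvw : G.Adj v w) (hvw' : G.Adj v w') : w = w' := by
  -- Otherwise quadrangles at `a` over `w, w'` and at `b` over `c, v` give a `K_{2,3}` between
  -- `{c, v}` and `{w, w', e}`.
  by_contra hne
  have hc := hm.1
  have da := hc.dist_eq_add_one_of_adj_of_mem_halfspace hvw.symm hw hv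
  have da' := hc.dist_eq_add_one_of_adj_of_mem_halfspace hvw'.symm hw' hv
  rw [mem_halfspace] at hv hw
  have := dist_comm (G := G) (u := a) (v := w)
  have := dist_comm (G := G) (u := a) (v := w')
  obtain ⟨c, hwc, hw'c, hac⟩ := hm.exists_adj_adj_of_dist_eq_two (u := a)
    (hm.dist_eq_two hvw.symm hvw' hne) (by omega)
  have := dist_comm (G := G) (u := a) (v := c)
  have := dist_eq_one_iff_adj.mpr hwc
  have hc_mem : c ∈ G.halfspace a b := hc.mem_halfspace_of_between hab hw (by
    unfold Between; omega)
  have hcv : c ≠ v := by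
    rintro rfl
    omega
  have := dist_comm (G := G) (u := b) (v := c)
  have := dist_comm (G := G) (u := b) (v := v)
  rw [mem_halfspace] at hc_mem
  obtain ⟨e, hce, hve, hbe⟩ := hm.exists_adj_adj_of_dist_eq_two (u := b)
    (hm.dist_eq_two hwc.symm hvw.symm hcv) (by omega)
  have := dist_comm (G := G) (u := b) (v := e)
  have := dist_eq_one_iff_adj.mpr hve
  have he : e ∈ G.halfspace b a := hc.mem_halfspace_of_between hab.symm hv (by
    unfold Between; omega)
  exact hcv <| hm.eq_of_adj_of_adj_of_adj hne (ne_of_mem_halfspace hw he)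
    (ne_of_mem_halfspace hw' he) hwc hw'c hce.symm hvw.symm hvw'.symm hve.symm

theorem dist_add_dist_eq_of_between (hm : IsMedianGraph G) (hab : G.Adj a b)
    (ih : ∀ ⦃x'⦄, x' ∈ G.halfspace a b → ∀ ⦃y'⦄, y' ∈ G.halfspace a b →
      ∀ ⦃z'⦄, G.Between x' z' y' → G.dist x' y' < G.dist x y → z' ∈ G.halfspace a b)
    (hx : x ∈ G.halfspace a b) (hy : y ∈ G.halfspace a b) (hz : z ∈ G.halfspace b a)
    (h : G.Between x z y) : G.dist y a + G.dist x y = G.dist x a + 2 := by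
  -- The first step `x₁` from `x` towards `z` lies in `W_ba`, and the median of `x₁, y, a` is `y`.
  have hc := hm.1
  have := hc.pos_dist_of_ne (ne_of_mem_halfspace hx hz)
  obtain ⟨x₁, hxx₁, hx₁z⟩ :=
    exists_adj_dist_eq_of_dist_eq_add_one (show G.dist x z = G.dist x z - 1 + 1 by omega)
  have := dist_eq_one_iff_adj.mpr hxx₁
  have := hc.dist_triangle (u := x) (v := x₁) (w := y)
  have := hc.dist_triangle (u := x₁) (v := z) (w := y)
  unfold Between at h
  have hx₁ : x₁ ∈ G.halfspace b a := (hm.mem_halfspace_or hab x₁).resolve_left fun hx₁ =>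
    ne_of_mem_halfspace (ih hx₁ hy (z' := z) (by unfold Between; omega) (by omega)) hz rfl
  obtain ⟨m, ⟨hm₁, hm₂, hm₃⟩, -⟩ := hm.2 x₁ y a
  have hmy : m = y := by
    by_contra hne
    have := hc.pos_dist_of_ne hne
    have := hc.dist_triangle (u := x) (v := x₁) (w := m)
    have := hc.dist_triangle (u := x) (v := m) (w := y)
    have hm_mem := hc.mem_halfspace_of_between hab hy hm₃
    exact ne_of_mem_halfspace (ih hx hm_mem (z' := x₁) (by unfold Between; omega) (by omega))
      hx₁ rfl
  subst hmy
  have := hc.dist_eq_add_one_of_adj_of_mem_halfspace hxx₁ hx hx₁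
  rw [dist_self] at hm₁
  omega

theorem isIntervalConvex_halfspace (hm : IsMedianGraph G) (hab : G.Adj a b) :
    G.IsIntervalConvex (G.halfspace a b) := by
  intro x hx y hy z h
  induction hn : G.dist x y using Nat.strong_induction_on generalizing x y z with
  | _ n ih =>
  have ih' : ∀ ⦃x'⦄, x' ∈ G.halfspace a b → ∀ ⦃y'⦄, y' ∈ G.halfspace a b →
      ∀ ⦃z'⦄, G.Between x' z' y' → G.dist x' y' < n → z' ∈ G.halfspace a b :=
    fun x' hx' y' hy' z' h' hlt => ih _ hlt hx' hy' h' rfl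
  refine (hm.mem_halfspace_or hab z).resolve_right fun hz => ?_
  -- Then `G.dist x y = 2`, so `z ∈ W_ba` is a common neighbour of `x ≠ y` in `W_ab`.
  have h₁ := hm.dist_add_dist_eq_of_between hab (hn ▸ ih') hx hy hz h
  have h₂ :=
    hm.dist_add_dist_eq_of_between hab (dist_comm (G := G) ▸ hn ▸ ih') hy hx hz h.symm
  have := hm.1.pos_dist_of_ne (ne_of_mem_halfspace hx hz)
  have := hm.1.pos_dist_of_ne (ne_of_mem_halfspace hy hz)
  have := dist_comm (G := G) (u := x) (v := y)
  have := dist_comm (G := G) (u := z) (v := x)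
  have := dist_comm (G := G) (u := z) (v := y)
  unfold Between at h
  have hxz : G.Adj z x := dist_eq_one_iff_adj.mp (by omega)
  have hyz : G.Adj z y := dist_eq_one_iff_adj.mp (by omega)
  have hxy := hm.eq_of_adj_of_mem_halfspace hab hz hx hy hxz hyz
  subst hxy
  rw [SimpleGraph.dist_self] at h₁
  omega

theorem dist_eq_add_one_of_adj_of_mem_halfspace (hm : IsMedianGraph G) (hab : G.Adj a b)
    (hz : z ∈ G.halfspace a b) (hu : u ∈ G.halfspace a b) (hw : w ∈ G.halfspace b a)
    (huw : G.Adj u w) : G.dist z w = G.dist z u + 1 := by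
  refine ((hm.mem_halfspace_or huw z).resolve_right fun hz' => ?_).symm
  have := dist_eq_one_iff_adj.mpr huw.symm
  rw [mem_halfspace] at hz'
  exact ne_of_mem_halfspace (hm.isIntervalConvex_halfspace hab hz hu (z := w) (by
    unfold Between; omega)) hw rfl

theorem dist_eq_dist_of_adj_of_adj (hm : IsMedianGraph G) (hab : G.Adj a b)
    (hu : u ∈ G.halfspace a b) (hv : v ∈ G.halfspace b a) (huv : G.Adj u v)
    (hu' : u' ∈ G.halfspace a b) (hv' : v' ∈ G.halfspace b a) (hu'v' : G.Adj u' v') :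
    G.dist v v' = G.dist u u' := by
  have := hm.dist_eq_add_one_of_adj_of_mem_halfspace hab hu hu' hv' hu'v'
  have := hm.dist_eq_add_one_of_adj_of_mem_halfspace hab.symm hv' hv hu huv.symm
  have := dist_comm (G := G) (u := u) (v := v')
  have := dist_comm (G := G) (u := v) (v := v')
  omega

theorem isIntervalConvex_halfspaceBoundary (hm : IsMedianGraph G) (hab : G.Adj a b) :
    G.IsIntervalConvex (G.halfspaceBoundary a b) := by
  rintro u ⟨hu, v, hv, huv⟩ u' ⟨hu', v', hv', hu'v'⟩ z h
  have hz := hm.isIntervalConvex_halfspace hab hu hu' h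
  refine ⟨hz, ?_⟩
  obtain ⟨c, ⟨h₁, h₂, h₃⟩, -⟩ := hm.2 v v' z
  have := hm.dist_eq_dist_of_adj_of_adj hab hu hv huv hu' hv' hu'v'
  have := hm.dist_eq_add_one_of_adj_of_mem_halfspace hab hz hu hv huv
  have := hm.dist_eq_add_one_of_adj_of_mem_halfspace hab hz hu' hv' hu'v'
  have := dist_comm (G := G) (u := z) (v := v)
  have := dist_comm (G := G) (u := z) (v := v')
  have := dist_comm (G := G) (u := z) (v := u)
  have := dist_comm (G := G) (u := c) (v := v')
  unfold Between at h
  -- summing the three median equations gives `G.dist z c = 1`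
  refine ⟨c, hm.isIntervalConvex_halfspace hab.symm hv hv' h₁, dist_eq_one_iff_adj.mp ?_⟩
  rw [dist_comm]
  omega

theorem halfspace_subset_halfspace (hm : IsMedianGraph G) (hab : G.Adj a b)
    (hc : c ∈ G.halfspace b a) (hc' : c ∉ G.halfspaceBoundary b a) (hd : d ∈ G.halfspace b a)
    (hcd : G.Adj c d) (he : e ∈ G.halfspace a b) (hde : G.Adj d e) :
    G.halfspace c d ⊆ G.halfspace b a := by
  intro t ht
  refine (hm.mem_halfspace_or hab t).resolve_left fun ht' => ?_
  have htd := hm.dist_eq_add_one_of_adj_of_mem_halfspace hab ht' he hd hde.symm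
  obtain ⟨m, ⟨h₁, h₂, h₃⟩, -⟩ := hm.2 t c e
  have hm_mem := hm.isIntervalConvex_halfspace hab ht' he h₂
  have := hm.dist_eq_two hcd hde (ne_of_mem_halfspace he hc).symm
  have := hm.1.pos_dist_of_ne (ne_of_mem_halfspace hm_mem hc).symm
  rw [mem_halfspace] at ht
  rcases (by omega : G.dist c m = 1 ∨ G.dist m e = 0) with hcm | hme
  · exact hc' ⟨hc, m, hm_mem, dist_eq_one_iff_adj.mp hcm⟩
  · obtain rfl := hm.1.dist_eq_zero_iff.mp hme
    have := dist_comm (G := G) (u := m) (v := c)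
    omega

theorem exists_adj_halfspace_subset_halfspaceBoundary [Finite V] [Nontrivial V]
    (hm : IsMedianGraph G) :
    ∃ a b, G.Adj a b ∧ G.halfspace b a ⊆ G.halfspaceBoundary b a := by
  obtain ⟨x⟩ := (inferInstance : Nonempty V)
  obtain ⟨z, hxz⟩ := hm.1.preconnected.exists_adj_of_nontrivial x
  obtain ⟨⟨a, b⟩, hab, hmin⟩ := Set.exists_min_image {p : V × V | G.Adj p.1 p.2}
    (fun p => (G.halfspace p.2 p.1).ncard) (Set.toFinite _) ⟨(x, z), hxz⟩
  refine ⟨a, b, hab, fun y hy => ?_⟩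
  -- A shortest path from `y ∈ W_ba \ U_ba` to `b` enters `U_ba` along an edge `cd`, and then
  -- `W_cd ⊊ W_ba` contradicts the minimality of `W_ba`.
  by_contra hy'
  obtain ⟨p, hp⟩ := hm.1.exists_walk_length_eq_dist y b
  have hsupp : ∀ v ∈ p.support, v ∈ G.halfspace b a := fun v hv =>
    hm.1.mem_halfspace_of_between hab.symm hy (p.between_of_mem_support hp hv)
  obtain ⟨⟨⟨c, d⟩, hcd⟩, hdart, hc, hd⟩ :=
    p.exists_boundary_dart (G.halfspaceBoundary b a)ᶜ hy'
      (not_not.mpr (mem_halfspaceBoundary_self hab.symm))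
  obtain ⟨hd_mem, e, he, hde⟩ := not_not.mp hd
  have hsub := hm.halfspace_subset_halfspace hab
    (hsupp c (p.dart_fst_mem_support_of_mem_darts hdart)) hc hd_mem hcd he hde
  have hlt := Set.ncard_lt_ncard (ssubset_of_subset_not_subset hsub fun h =>
    ne_of_mem_halfspace (h hd_mem) (mem_halfspace_self hcd.symm) rfl) (Set.toFinite _)
  exact (hmin (d, c) hcd.symm).not_gt hlt

end IsMedianGraph

section PeripheralConvexExpansion

open SimpleGraph

variable {V : Type u} {G : SimpleGraph V} {S : Set V}

/-- The expansion sits inside `G □ K₂`: a vertex is determined by its projection to `G` and its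
level, `0` on `G` and `1` on the copy of `S`. -/
def pceProj (S : Set V) : V ⊕ S → V := Sum.elim id Subtype.val

def pceLevel (S : Set V) : V ⊕ S → ℕ := Sum.elim (fun _ => 0) (fun _ => 1)

theorem pceLevel_le_one (x : V ⊕ S) : pceLevel S x ≤ 1 := by
  cases x <;> simp [pceLevel]

theorem pceProj_mem_of_pceLevel_eq_one {x : V ⊕ S} (h : pceLevel S x = 1) :
    pceProj S x ∈ S := by
  cases x with
  | inl => simp [pceLevel] at h
  | inr s => exact s.2

theorem pce_ext {x y : V ⊕ S} (hp : pceProj S x = pceProj S y)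
    (hl : pceLevel S x = pceLevel S y) : x = y := by
  cases x <;> cases y <;> simp_all [pceProj, pceLevel, Subtype.ext_iff]

def pceInl : G →g pceGraph G S := ⟨Sum.inl, id⟩

def pceInr : G.induce S →g pceGraph G S := ⟨Sum.inr, id⟩

theorem pceGraph_connected (hc : G.Connected) : (pceGraph G S).Connected := by
  have hinl : ∀ x, (pceGraph G S).Reachable x (.inl (pceProj S x)) := by
    rintro (u | s)
    · rfl
    · exact (show (pceGraph G S).Adj (.inr s) (.inl s) from rfl).reachable
  have := hc.nonempty
  refine .mk fun x y => (hinl x).trans ?_ |>.trans (hinl y).symm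
  exact (hc _ _).map pceInl

theorem pceGraph_adj_cases {x y : V ⊕ S} (h : (pceGraph G S).Adj x y) :
    G.Adj (pceProj S x) (pceProj S y) ∧ pceLevel S x = pceLevel S y ∨
      pceProj S x = pceProj S y ∧ Nat.dist (pceLevel S x) (pceLevel S y) = 1 := by
  cases x <;> cases y <;> simp_all [pceGraph, pceProj, pceLevel, Nat.dist]

theorem le_dist_pceGraph (hc : G.Connected) (x y : V ⊕ S) :
    G.dist (pceProj S x) (pceProj S y) + Nat.dist (pceLevel S x) (pceLevel S y) ≤
      (pceGraph G S).dist x y := by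
  have key := ((pceGraph_connected hc).preconnected x y).le_add_dist
    (f := fun w => G.dist (pceProj S w) (pceProj S y) + Nat.dist (pceLevel S w) (pceLevel S y))
    fun u v huv => by
      have := hc.dist_triangle (u := pceProj S u) (v := pceProj S v) (w := pceProj S y)
      rcases pceGraph_adj_cases huv with ⟨hadj, hl⟩ | ⟨hp, hl⟩
      · rw [dist_eq_one_iff_adj.mpr hadj, hl] at *
        omega
      · rw [hp]
        unfold Nat.dist at *
        omega
  simpa using key

theorem dist_pceGraph_le (hc : G.Connected) (hS : G.IsIntervalConvex S) :
    ∀ x y : V ⊕ S, (pceGraph G S).dist x y ≤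
      G.dist (pceProj S x) (pceProj S y) + Nat.dist (pceLevel S x) (pceLevel S y)
  | .inl u, .inl v => by
    simp only [pceProj, pceLevel, Sum.elim_inl, id, Nat.dist_self, add_zero]
    exact pceInl.dist_le (hc u v)
  | .inr u, .inr v => by
    have := pceInr.dist_le ((hS.induce_connected hc ⟨u, u.2⟩).preconnected u v)
    rw [hS.dist_induce hc] at this
    simp only [pceProj, pceLevel, Sum.elim_inr, Nat.dist_self, add_zero]
    exact this
  | .inl u, .inr v => by
    have := (pceGraph_connected hc).dist_triangle (u := .inl u) (v := .inl v) (w := .inr v)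
    have := dist_pceGraph_le hc hS (.inl u) (.inl (v : V))
    rw [dist_eq_one_iff_adj.mpr (show (pceGraph G S).Adj (.inl v) (.inr v) from rfl)] at *
    simp only [pceProj, pceLevel, Sum.elim_inl, Sum.elim_inr, id, Nat.dist] at *
    omega
  | .inr u, .inl v => by
    rw [SimpleGraph.dist_comm, SimpleGraph.dist_comm (u := pceProj S _), Nat.dist_comm]
    exact dist_pceGraph_le hc hS (.inl v) (.inr u)

theorem dist_pceGraph (hc : G.Connected) (hS : G.IsIntervalConvex S) (x y : V ⊕ S) :
    (pceGraph G S).dist x y =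
      G.dist (pceProj S x) (pceProj S y) + Nat.dist (pceLevel S x) (pceLevel S y) :=
  le_antisymm (dist_pceGraph_le hc hS x y) (le_dist_pceGraph hc x y)

theorem between_pceGraph_iff (hc : G.Connected) (hS : G.IsIntervalConvex S) {x t y : V ⊕ S} :
    (pceGraph G S).Between x t y ↔ G.Between (pceProj S x) (pceProj S t) (pceProj S y) ∧
      Nat.dist (pceLevel S x) (pceLevel S t) + Nat.dist (pceLevel S t) (pceLevel S y) =
        Nat.dist (pceLevel S x) (pceLevel S y) := by
  have := hc.dist_triangle (u := pceProj S x) (v := pceProj S t) (w := pceProj S y)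
  simp only [Between, dist_pceGraph hc hS, Nat.dist] at *
  omega

/-- The median of `x`, `y`, `z` in the expansion: the median `m` of their projections, on the
level shared by at least two of them (then `m` lies between two points of `S`). -/
theorem SimpleGraph.IsIntervalConvex.exists_pceProj_eq_pceLevel_eq (hS : G.IsIntervalConvex S)
    {x y z : V ⊕ S} {m : V} (hm : G.Between (pceProj S x) m (pceProj S y) ∧
      G.Between (pceProj S x) m (pceProj S z) ∧ G.Between (pceProj S y) m (pceProj S z)) :
    ∃ t, pceProj S t = m ∧ pceLevel S t = (pceLevel S x + pceLevel S y + pceLevel S z) / 2 := by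
  have := pceLevel_le_one x
  have := pceLevel_le_one y
  have := pceLevel_le_one z
  by_cases h : 2 ≤ pceLevel S x + pceLevel S y + pceLevel S z
  · have mem := @pceProj_mem_of_pceLevel_eq_one
    have hmS : m ∈ S := by
      rcases (by omega : pceLevel S x = 1 ∧ pceLevel S y = 1 ∨
        pceLevel S x = 1 ∧ pceLevel S z = 1 ∨ pceLevel S y = 1 ∧ pceLevel S z = 1)
        with ⟨h₁, h₂⟩ | ⟨h₁, h₂⟩ | ⟨h₁, h₂⟩
      · exact hS (mem h₁) (mem h₂) hm.1
      · exact hS (mem h₁) (mem h₂) hm.2.1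
      · exact hS (mem h₁) (mem h₂) hm.2.2
    exact ⟨.inr ⟨m, hmS⟩, rfl, show 1 = _ by omega⟩
  · exact ⟨.inl m, rfl, show 0 = _ by omega⟩

theorem isMedianGraph_pceGraph (hm : IsMedianGraph G) (hS : IsConvexSet G S) :
    IsMedianGraph (pceGraph G S) := by
  have hc := hm.1
  rw [isConvexSet_iff_isIntervalConvex hc] at hS
  refine ⟨pceGraph_connected hc, fun x y z => ?_⟩
  show ∃! t, (pceGraph G S).Between x t y ∧ (pceGraph G S).Between x t z ∧
    (pceGraph G S).Between y t z
  simp only [between_pceGraph_iff hc hS]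
  obtain ⟨m, hm_med, hm_uniq⟩ := hm.2 (pceProj S x) (pceProj S y) (pceProj S z)
  obtain ⟨t, htm, htl⟩ := hS.exists_pceProj_eq_pceLevel_eq hm_med
  have := pceLevel_le_one x
  have := pceLevel_le_one y
  have := pceLevel_le_one z
  refine ⟨t, ?_, fun t' ht' => pce_ext ?_ ?_⟩
  · dsimp only
    rw [htm]
    refine ⟨⟨hm_med.1, ?_⟩, ⟨hm_med.2.1, ?_⟩, ⟨hm_med.2.2, ?_⟩⟩ <;>
      · rw [htl]
        unfold Nat.dist
        omega
  · rw [htm]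
    exact hm_uniq _ ⟨ht'.1.1, ht'.2.1.1, ht'.2.2.1⟩
  · have := pceLevel_le_one t'
    have := ht'.1.2
    have := ht'.2.1.2
    have := ht'.2.2.2
    rw [htl]
    unfold Nat.dist at *
    omega

end PeripheralConvexExpansion

section Classification

open SimpleGraph

variable {V : Type u} {V' : Type*} {G : SimpleGraph V} {G' : SimpleGraph V'} {S : Set V}

theorem isMedianGraph_of_subsingleton [Subsingleton V] [Nonempty V] (G : SimpleGraph V) :
    IsMedianGraph G :=
  ⟨.of_subsingleton, fun u _ _ =>
    ⟨u, by simp [Subsingleton.elim _ u], fun _ _ => Subsingleton.elim _ _⟩⟩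

theorem IsMedianGraph.iso (hm : IsMedianGraph G) (e : G ≃g G') : IsMedianGraph G' := by
  refine ⟨e.connected_iff.mp hm.1, fun u v w => ?_⟩
  have hd : ∀ x y, G'.dist x y = G.dist (e.symm x) (e.symm y) := fun x y => by
    simpa using (e.symm.dist_eq x y).symm
  simp only [hd]
  exact e.toEquiv.existsUnique_congr_left.mp (hm.2 _ _ _)

theorem IsMedianGraph.induce (hm : IsMedianGraph G) (hS : G.IsIntervalConvex S)
    (hne : S.Nonempty) : IsMedianGraph (G.induce S) := by
  refine ⟨hS.induce_connected hm.1 hne, fun u v w => ?_⟩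
  simp only [hS.dist_induce hm.1]
  obtain ⟨m, hm_med, hm_uniq⟩ := hm.2 u v w
  exact ⟨⟨m, hS u.2 v.2 hm_med.1⟩, hm_med, fun t ht => Subtype.ext (hm_uniq t ht)⟩

theorem ObtainedByPCE.isMedianGraph {G : SimpleGraph V} (h : ObtainedByPCE V G) :
    IsMedianGraph G := by
  induction h with
  | base => exact isMedianGraph_of_subsingleton _
  | expand _ _ _ hS _ ih => exact isMedianGraph_pceGraph ih hS
  | iso _ _ _ e ih => exact ih.iso e.some

theorem nonempty_pceGraph_iso {A : Set V} {U : Set A} (f : ↥Aᶜ ≃ U)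
    (hcross : ∀ (v : ↥Aᶜ) (w : A), G.Adj v w ↔ w = f v)
    (hcopy : ∀ v v' : ↥Aᶜ, G.Adj v v' ↔ G.Adj (f v : A) (f v' : A)) :
    Nonempty (pceGraph (G.induce A) U ≃g G) := by
  classical
  refine ⟨⟨(Equiv.sumCongr (Equiv.refl A) f.symm).trans (Equiv.Set.sumCompl A), ?_⟩⟩
  rintro (u | s) (u' | s')
  · simp [pceGraph]
  · simpa [pceGraph, G.adj_comm] using hcross (f.symm s') u
  · simpa [pceGraph, eq_comm] using hcross (f.symm s) u'
  · simpa [pceGraph] using hcopy (f.symm s) (f.symm s')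

theorem ObtainedByPCE.of_subsingleton [Subsingleton V] [Nonempty V] (G : SimpleGraph V) :
    ObtainedByPCE V G := by
  have : Unique V := uniqueOfSubsingleton (Classical.arbitrary V)
  refine .iso ⊥ G .base ⟨⟨Equiv.ofUnique PUnit V, fun {a b} => ?_⟩⟩
  simp [Subsingleton.elim a b]

theorem IsMedianGraph.nonempty_pceGraph_halfspace_iso (hm : IsMedianGraph G) {a b : V}
    (hab : G.Adj a b) (hperi : G.halfspace b a ⊆ G.halfspaceBoundary b a) :
    Nonempty (pceGraph (G.induce (G.halfspace a b))
      ({u : G.halfspace a b | (u : V) ∈ G.halfspaceBoundary a b}) ≃g G) := by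
  have hAc : ∀ v : ↥(G.halfspace a b)ᶜ, (v : V) ∈ G.halfspace b a := fun v =>
    (hm.mem_halfspace_or hab v).resolve_left v.2
  have hpartner (v : ↥(G.halfspace a b)ᶜ) :
      ∃ u : ↥({u : G.halfspace a b | (u : V) ∈ G.halfspaceBoundary a b}), G.Adj v u.1 := by
    obtain ⟨-, w, hw, hvw⟩ := hperi (hAc v)
    exact ⟨⟨⟨w, hw⟩, hw, v, hAc v, hvw.symm⟩, hvw⟩
  choose f hf using hpartner
  have hcross (v : ↥(G.halfspace a b)ᶜ) (w : G.halfspace a b) : G.Adj v w ↔ w = (f v).1 :=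
    ⟨fun h => Subtype.ext (hm.eq_of_adj_of_mem_halfspace hab (hAc v) w.2 (f v).1.2 h (hf v)),
      fun h => h ▸ hf v⟩
  have hf_bij : Function.Bijective f := by
    refine ⟨fun v v' h => Subtype.ext ?_, fun u => ?_⟩
    · exact hm.eq_of_adj_of_mem_halfspace hab.symm (f v).1.2 (hAc v) (hAc v') (hf v).symm
        (h ▸ (hf v').symm)
    · obtain ⟨-, v, hv, huv⟩ := u.2
      have hvA : v ∈ (G.halfspace a b)ᶜ := fun h => ne_of_mem_halfspace h hv rfl
      exact ⟨⟨v, hvA⟩, Subtype.ext ((hcross ⟨v, hvA⟩ u.1).mp huv.symm).symm⟩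
  refine nonempty_pceGraph_iso (.ofBijective f hf_bij) hcross fun v v' => ?_
  rw [← dist_eq_one_iff_adj, ← dist_eq_one_iff_adj, hm.dist_eq_dist_of_adj_of_adj hab (f v).1.2
    (hAc v) (hf v).symm (f v').1.2 (hAc v') (hf v').symm]
  rfl

theorem IsMedianGraph.obtainedByPCE [Finite V] (hm : IsMedianGraph G) : ObtainedByPCE V G := by
  induction hn : Nat.card V using Nat.strong_induction_on generalizing V with
  | _ n ih =>
  subst hn
  rcases subsingleton_or_nontrivial V with hV | hV
  · have := hm.1.nonempty
    exact .of_subsingleton G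
  obtain ⟨a, b, hab, hperi⟩ := hm.exists_adj_halfspace_subset_halfspaceBoundary
  have hA := hm.isIntervalConvex_halfspace hab
  have ha : a ∈ G.halfspace a b := mem_halfspace_self hab
  let U : Set (G.halfspace a b) := {u | (u : V) ∈ G.halfspaceBoundary a b}
  have hU : IsConvexSet (G.induce (G.halfspace a b)) U := by
    rw [isConvexSet_iff_isIntervalConvex (hA.induce_connected hm.1 ⟨a, ha⟩)]
    intro x hx y hy z h
    exact hm.isIntervalConvex_halfspaceBoundary hab hx hy
      (by simpa only [Between, hA.dist_induce hm.1] using h)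
  have hcard : Nat.card (G.halfspace a b) < Nat.card V :=
    Finite.card_subtype_lt (ne_of_mem_halfspace · (mem_halfspace_self hab.symm) rfl)
  exact .iso _ G (.expand _ U ⟨⟨a, ha⟩, mem_halfspaceBoundary_self hab⟩ hU
    (ih _ hcard (hm.induce hA ⟨a, ha⟩) rfl)) (hm.nonempty_pceGraph_halfspace_iso hab hperi)

end Classification

theorem isMedianGraph_iff_obtainedByPCE_general {V : Type u} [Fintype V]
    (G : SimpleGraph V) :
    IsMedianGraph G ↔ ObtainedByPCE V G :=
  ⟨IsMedianGraph.obtainedByPCE, ObtainedByPCE.isMedianGraph⟩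

/-- A finite connected simple graph is a median graph iff it
can be obtained from the one-vertex graph by a finite sequence of peripheral
convex expansions. -/
theorem isMedianGraph_iff_obtainedByPCE {V : Type u} [Fintype V]
    (G : SimpleGraph V) (hconn : G.Connected) :
    IsMedianGraph G ↔ ObtainedByPCE V G :=
  isMedianGraph_iff_obtainedByPCE_general G
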